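/- arXiv:2309.09026 — 5 statements merged into one kernel-verified Lean document; each statement's English description precedes it below -/
import Mathlib

section
/- Let P ⊆ ℝ^d be a finite union of closed integral unit cubes and let B(v,I) be a relatively open integral unit cube. If B(v,I) meets the topological interior of P, then B(v,I) is contained in the topological interior of P. -/
/-- The relatively open integral unit cube `B(v, I)`. -/
def openCube {d : ℕ} (v : Fin d → ℤ) (I : Finset (Fin d)) : Set (Fin d → ℝ) :=
  {x | ∀ i, (i ∈ I → (v i : ℝ) < x i ∧ x i < v i + 1) ∧ (i ∉ I → x i = v i)}

/-- The closed integral unit cube `v + [0,1]^d`. -/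
def closedCube {d : ℕ} (v : Fin d → ℤ) : Set (Fin d → ℝ) :=
  {x | ∀ i, (v i : ℝ) ≤ x i ∧ x i ≤ v i + 1}

/-!
Fix `x ∈ B(v, I) ∩ int P` and let `y ∈ B(v, I)`. For `z` near `y`, the point `z'` that agrees with
`x` on the coordinates in `I` and with `z` off `I` is near `x` (as `x` and `y` agree off `I`), hence
lies in some cube `w + [0,1]^d` of `P`. For `i ∈ I` the value `x i` lies strictly between the
integers `v i` and `v i + 1`, which forces `w i = v i`; so if also `z i ∈ (v i, v i + 1)` for
`i ∈ I`, then `z` lies in that same cube. These `z` form an open neighbourhood of `y` inside `P`.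
-/

open Set

theorem Int.eq_of_mem_Ioo_of_mem_Icc {m n : ℤ} {t : ℝ} (hm : t ∈ Ioo (m : ℝ) (m + 1))
    (hn : t ∈ Icc (n : ℝ) (n + 1)) : m = n := by
  have h₁ : (m : ℝ) < n + 1 := hm.1.trans_le hn.2
  have h₂ : (n : ℝ) < m + 1 := hn.1.trans_lt hm.2
  norm_cast at h₁ h₂
  omega

theorem continuous_finset_piecewise_const {ι : Type*} {π : ι → Type*}
    [∀ i, TopologicalSpace (π i)] (s : Finset ι) [DecidablePred (· ∈ s)] (x : ∀ i, π i) :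
    Continuous fun z => s.piecewise x z := by
  refine continuous_pi fun i => ?_
  by_cases hi : i ∈ s
  · simpa only [s.piecewise_eq_of_mem _ _ hi] using continuous_const
  · simpa only [s.piecewise_eq_of_notMem _ _ hi] using continuous_apply i

section

variable {d : ℕ} {v : Fin d → ℤ} {I : Finset (Fin d)} {x y z : Fin d → ℝ}

theorem openCube_subset_pi_Ioo :
    openCube v I ⊆ (I : Set (Fin d)).pi fun i => Ioo (v i : ℝ) (v i + 1) :=
  fun _ hx i hi => (hx i).1 hi

theorem piecewise_eq_of_mem_openCube (hx : x ∈ openCube v I) (hy : y ∈ openCube v I) :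
    I.piecewise x y = x := by
  funext i
  by_cases hi : i ∈ I
  · exact I.piecewise_eq_of_mem x y hi
  · rw [I.piecewise_eq_of_notMem x y hi, (hy i).2 hi, (hx i).2 hi]

theorem mem_closedCube_of_piecewise_mem {w : Fin d → ℤ}
    (hx : x ∈ (I : Set (Fin d)).pi fun i => Ioo (v i : ℝ) (v i + 1))
    (hz : z ∈ (I : Set (Fin d)).pi fun i => Icc (v i : ℝ) (v i + 1))
    (hxz : I.piecewise x z ∈ closedCube w) : z ∈ closedCube w := by
  intro i
  by_cases hi : i ∈ I
  · have hw := hxz i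
    rw [I.piecewise_eq_of_mem _ _ hi] at hw
    rw [← Int.eq_of_mem_Ioo_of_mem_Icc (hx i hi) hw]
    exact hz i hi
  · simpa only [I.piecewise_eq_of_notMem _ _ hi] using hxz i

theorem mem_biUnion_closedCube_of_piecewise_mem {S : Set (Fin d → ℤ)}
    (hx : x ∈ (I : Set (Fin d)).pi fun i => Ioo (v i : ℝ) (v i + 1))
    (hz : z ∈ (I : Set (Fin d)).pi fun i => Icc (v i : ℝ) (v i + 1))
    (hxz : I.piecewise x z ∈ ⋃ w ∈ S, closedCube w) : z ∈ ⋃ w ∈ S, closedCube w := by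
  obtain ⟨w, hwS, hw⟩ := mem_iUnion₂.mp hxz
  exact mem_iUnion₂.mpr ⟨w, hwS, mem_closedCube_of_piecewise_mem hx hz hw⟩

end

/-- If a relatively open integral unit cube meets the topological interior of a
finite union of closed integral unit cubes `P`, then it is contained in the
topological interior of `P`. -/
theorem openCube_subset_interior_of_inter_nonempty (d : ℕ) (S : Finset (Fin d → ℤ))
    (P : Set (Fin d → ℝ)) (hP : P = ⋃ v ∈ S, closedCube v)
    (v : Fin d → ℤ) (I : Finset (Fin d))
    (h : (openCube v I ∩ interior P).Nonempty) :
    openCube v I ⊆ interior P := by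
  obtain ⟨x, hxB, hxP⟩ := h
  intro y hyB
  set U := (I : Set (Fin d)).pi fun i => Ioo (v i : ℝ) (v i + 1)
  have hUP : U ∩ (fun z => I.piecewise x z) ⁻¹' interior P ⊆ P := by
    rintro z ⟨hzU, hzP⟩
    rw [hP] at hzP ⊢
    exact mem_biUnion_closedCube_of_piecewise_mem (openCube_subset_pi_Ioo hxB)
      (fun i hi => Ioo_subset_Icc_self (hzU i hi)) (interior_subset hzP)
  have hU_open : IsOpen U := isOpen_set_pi I.finite_toSet fun _ _ => isOpen_Ioo
  have hy : y ∈ U ∩ (fun z => I.piecewise x z) ⁻¹' interior P := by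
    refine ⟨openCube_subset_pi_Ioo hyB, ?_⟩
    rwa [mem_preimage, piecewise_eq_of_mem_openCube hxB hyB]
  exact interior_maximal hUP
    (hU_open.inter (isOpen_interior.preimage (continuous_finset_piecewise_const I x))) hy
end

section
/- Let P ⊆ ℝ^d be a finite union of closed integral unit cubes. If x and y belong to the same relatively open integral unit cube, then the tangent cone of P at x equals the tangent cone of P at y (as subsets of ℝ^d). In particular, the tangent cone of P is constant along each relatively open integral unit cube. -/
lemma isClosed_closedCube {d : ℕ} (v : Fin d → ℤ) : IsClosed (closedCube v) := by
  have : closedCube v = ⋂ i, (fun x : Fin d → ℝ => x i) ⁻¹' Set.Icc (v i : ℝ) (v i + 1) := by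
    ext x; simp [closedCube, Set.mem_iInter, Set.mem_Icc]
  rw [this]
  exact isClosed_iInter fun i => isClosed_Icc.preimage (continuous_apply i)

lemma tangentCone_subset_of_openCube (d : ℕ) (S : Finset (Fin d → ℤ))
    (P : Set (Fin d → ℝ)) (hP : P = ⋃ v ∈ S, closedCube v)
    (v : Fin d → ℤ) (I : Finset (Fin d)) (x y : Fin d → ℝ)
    (hx : x ∈ openCube v I) (hy : y ∈ openCube v I) :
    tangentConeAt ℝ P x ⊆ tangentConeAt ℝ P y := by
  have hev : ∀ᶠ u in nhds x, u ∈ P → (y - x + u) ∈ P := by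
    have hIoo : ∀ᶠ u in nhds x, ∀ i ∈ I, (v i : ℝ) < (y - x + u) i ∧ (y - x + u) i < v i + 1 := by
      rw [Filter.eventually_all_finset]
      intro i hi
      have hcont : Continuous fun u : Fin d → ℝ => (y i - x i) + u i :=
        continuous_const.add (continuous_apply i)
      have hyio : (v i : ℝ) < y i ∧ y i < v i + 1 := (hy i).1 hi
      have hmem : Set.Ioo (v i : ℝ) (v i + 1) ∈ nhds ((y i - x i) + x i) := by
        have : (y i - x i) + x i = y i := by ring
        rw [this]
        exact Ioo_mem_nhds hyio.1 hyio.2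
      have := (hcont.tendsto x).eventually_mem hmem
      filter_upwards [this] with u hu
      have : (y - x + u) i = (y i - x i) + u i := by simp [Pi.add_apply, Pi.sub_apply]
      rw [this]
      exact ⟨hu.1, hu.2⟩
    have hfar : ∀ᶠ u in nhds x, ∀ w ∈ S, x ∉ closedCube w → u ∉ closedCube w := by
      rw [Filter.eventually_all_finset]
      intro w hw
      by_cases hxw : x ∈ closedCube w
      · filter_upwards with u h; exact absurd hxw h
      · have hopen : IsOpen (closedCube w)ᶜ := (isClosed_closedCube w).isOpen_compl
        filter_upwards [hopen.mem_nhds hxw] with u hu _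
        exact hu
    filter_upwards [hIoo, hfar] with u h1 h2 hu
    rw [hP] at hu ⊢
    obtain ⟨w, hwS, hw⟩ := Set.mem_iUnion₂.1 hu
    have hxw : x ∈ closedCube w := by
      by_contra hc
      exact h2 w hwS hc hw
    refine Set.mem_iUnion₂.2 ⟨w, hwS, ?_⟩
    intro i
    by_cases hi : i ∈ I
    · have hxio : (v i : ℝ) < x i ∧ x i < v i + 1 := (hx i).1 hi
      have hxiw : (w i : ℝ) ≤ x i ∧ x i ≤ w i + 1 := hxw i
      have hwv : w i = v i := by
        have h1' : (w i : ℝ) < (v i : ℝ) + 1 := lt_of_le_of_lt hxiw.1 hxio.2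
        have h2' : (v i : ℝ) < (w i : ℝ) + 1 := lt_of_lt_of_le hxio.1 hxiw.2
        have h1'' : (w i : ℝ) < ((v i + 1 : ℤ) : ℝ) := by push_cast; linarith
        have h2'' : (v i : ℝ) < ((w i + 1 : ℤ) : ℝ) := by push_cast; linarith
        have a1 : w i < v i + 1 := by exact_mod_cast h1''
        have a2 : v i < w i + 1 := by exact_mod_cast h2''
        omega
      have := h1 i hi
      rw [hwv]
      constructor <;> linarith [this.1, this.2]
    · have hyx : y i = x i := by rw [(hy i).2 hi, (hx i).2 hi]
      have : (y - x + u) i = u i := by simp [Pi.add_apply, Pi.sub_apply, hyx]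
      rw [this]
      exact hw i
  have ht : {u | u ∈ P → y - x + u ∈ P} ∈ nhds x := hev
  rw [← tangentConeAt_inter_nhds ht]
  intro z hz
  rw [mem_tangentConeAt_iff_exists_seq_norm_tendsto_atTop] at hz ⊢
  obtain ⟨c, dd, hc, hmem, hcd⟩ := hz
  refine ⟨c, dd, hc, ?_, hcd⟩
  filter_upwards [hmem] with n hn
  have h := hn.2 hn.1
  have e : y - x + (x + dd n) = y + dd n := by abel
  rwa [e] at h

/-- The tangent cone of a finite union of closed integral unit cubes is constant
along each relatively open integral unit cube. -/
theorem tangentCone_constant_on_openCube (d : ℕ) (S : Finset (Fin d → ℤ))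
    (P : Set (Fin d → ℝ)) (hP : P = ⋃ v ∈ S, closedCube v)
    (v : Fin d → ℤ) (I : Finset (Fin d)) (x y : Fin d → ℝ)
    (hx : x ∈ openCube v I) (hy : y ∈ openCube v I) :
    tangentConeAt ℝ P x = tangentConeAt ℝ P y :=
  Set.Subset.antisymm
    (tangentCone_subset_of_openCube d S P hP v I x y hx hy)
    (tangentCone_subset_of_openCube d S P hP v I y x hy hx)
end

section
/- Let P ⊆ ℝ^d be a finite union of closed integral unit cubes and let t be a positive integer. Then #(tP ∩ ℤ^d) = Σ_{k=0}^{d} N_k(P)·(t−1)^k, where N_k(P) is the number of relatively open integral unit cubes of dimension k contained in P. -/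
/-- The set of lattice points of `ℝ^d`. -/
def latticePts (d : ℕ) : Set (Fin d → ℝ) :=
  {x | ∀ i, ∃ m : ℤ, x i = (m : ℝ)}

/-- `N_k(P)`: the number of relatively open integral unit cubes of dimension `k`
contained in `P` (distinct pairs `(v, I)` give distinct cubes). -/
noncomputable def cubeCount {d : ℕ} (P : Set (Fin d → ℝ)) (k : ℕ) : ℕ :=
  {p : (Fin d → ℤ) × Finset (Fin d) | p.2.card = k ∧ openCube p.1 p.2 ⊆ P}.ncard

open scoped Classical

/-- The index set of the open cell containing `x`. -/
noncomputable def cellI {d : ℕ} (x : Fin d → ℝ) : Finset (Fin d) :=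
  Finset.univ.filter fun i => (⌊x i⌋ : ℝ) ≠ x i

lemma mem_cell {d : ℕ} (x : Fin d → ℝ) :
    x ∈ openCube (fun i => ⌊x i⌋) (cellI x) := by
  intro i
  constructor
  · intro hi
    have hne : (⌊x i⌋ : ℝ) ≠ x i := (Finset.mem_filter.mp hi).2
    exact ⟨lt_of_le_of_ne (Int.floor_le _) hne, Int.lt_floor_add_one _⟩
  · intro hi
    have : ¬ (⌊x i⌋ : ℝ) ≠ x i := fun h => hi (Finset.mem_filter.mpr ⟨Finset.mem_univ _, h⟩)
    exact (not_not.mp this).symm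

lemma cell_unique {d : ℕ} {x : Fin d → ℝ} {v : Fin d → ℤ} {I : Finset (Fin d)}
    (hx : x ∈ openCube v I) : v = (fun i => ⌊x i⌋) ∧ I = cellI x := by
  have hfloor : ∀ i, ⌊x i⌋ = v i := by
    intro i
    by_cases hi : i ∈ I
    · obtain ⟨h1, h2⟩ := (hx i).1 hi
      exact Int.floor_eq_iff.mpr ⟨le_of_lt h1, by exact_mod_cast h2⟩
    · have := (hx i).2 hi
      rw [this]; exact Int.floor_intCast _
  constructor
  · funext i; exact (hfloor i).symm
  · ext i
    simp only [cellI, Finset.mem_filter, Finset.mem_univ, true_and]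
    constructor
    · intro hi
      have h1 := ((hx i).1 hi).1
      rw [hfloor i]
      exact ne_of_lt h1
    · intro hne
      by_contra hi
      exact hne (by rw [hfloor i, (hx i).2 hi])

lemma openCube_disjoint {d : ℕ} {p q : (Fin d → ℤ) × Finset (Fin d)} (hpq : p ≠ q) :
    Disjoint (openCube p.1 p.2) (openCube q.1 q.2) := by
  rw [Set.disjoint_left]
  intro x hx hx'
  obtain ⟨h1, h2⟩ := cell_unique hx
  obtain ⟨h1', h2'⟩ := cell_unique hx'
  exact hpq (Prod.ext (h1.trans h1'.symm) (h2.trans h2'.symm))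

lemma openCube_subset_closedCube {d : ℕ} {x : Fin d → ℝ} {v w : Fin d → ℤ}
    {I : Finset (Fin d)} (hx : x ∈ openCube v I) (hw : x ∈ closedCube w) :
    openCube v I ⊆ closedCube w := by
  intro y hy i
  obtain ⟨h1, h2⟩ := hw i
  by_cases hi : i ∈ I
  · obtain ⟨ha, hb⟩ := (hx i).1 hi
    obtain ⟨ha', hb'⟩ := (hy i).1 hi
    have hwv : (w i : ℝ) ≤ v i := by
      have : (w i : ℝ) < v i + 1 := lt_of_le_of_lt h1 hb
      have : w i < v i + 1 := by exact_mod_cast this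
      exact_mod_cast (by omega : w i ≤ v i)
    have hvw : (v i : ℝ) + 1 ≤ w i + 1 := by
      have : (v i : ℝ) < w i + 1 := lt_of_lt_of_le ha h2
      have : v i < w i + 1 := by exact_mod_cast this
      have : (v i : ℝ) ≤ w i := by exact_mod_cast (by omega : v i ≤ w i)
      linarith
    exact ⟨le_of_lt (lt_of_le_of_lt hwv ha'), le_of_lt (lt_of_lt_of_le hb' hvw)⟩
  · have hxv := (hx i).2 hi
    have hyv := (hy i).2 hi
    rw [hyv, ← hxv]
    exact ⟨h1, h2⟩

lemma cell_subset_P {d : ℕ} {S : Finset (Fin d → ℤ)} {P : Set (Fin d → ℝ)}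
    (hP : P = ⋃ v ∈ S, closedCube v) {x : Fin d → ℝ} (hx : x ∈ P) :
    openCube (fun i => ⌊x i⌋) (cellI x) ⊆ P := by
  rw [hP] at hx ⊢
  obtain ⟨w, hwS, hxw⟩ := Set.mem_iUnion₂.mp hx
  exact (openCube_subset_closedCube (mem_cell x) hxw).trans
    (Set.subset_iUnion₂ (s := fun v _ => closedCube v) w hwS)

lemma cubeSet_finite {d : ℕ} {S : Finset (Fin d → ℤ)} {P : Set (Fin d → ℝ)}
    (hP : P = ⋃ v ∈ S, closedCube v) :
    {p : (Fin d → ℤ) × Finset (Fin d) | openCube p.1 p.2 ⊆ P}.Finite := by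
  have big : {p : (Fin d → ℤ) × Finset (Fin d) | openCube p.1 p.2 ⊆ P} ⊆
      ⋃ w ∈ S, (Set.pi Set.univ fun i => ({w i, w i + 1} : Set ℤ)) ×ˢ
        (Set.univ : Set (Finset (Fin d))) := by
    rintro ⟨v, I⟩ hp
    -- the center of the cube
    set c : Fin d → ℝ := fun i => if i ∈ I then (v i : ℝ) + 1/2 else (v i : ℝ) with hc
    have hcmem : c ∈ openCube v I := by
      intro i
      constructor
      · intro hi
        simp only [hc, if_pos hi]
        constructor <;> linarith
      · intro hi
        simp only [hc, if_neg hi]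
    have hcP : c ∈ P := hp hcmem
    rw [hP] at hcP
    obtain ⟨w, hwS, hcw⟩ := Set.mem_iUnion₂.mp hcP
    refine Set.mem_iUnion₂.mpr ⟨w, hwS, ?_, Set.mem_univ _⟩
    intro i _
    obtain ⟨h1, h2⟩ := hcw i
    by_cases hi : i ∈ I
    · simp only [hc, if_pos hi] at h1 h2
      have ha : (w i : ℝ) < v i + 1 := by linarith
      have hb : (v i : ℝ) < w i + 1 := by linarith
      have ha' : w i < v i + 1 := by exact_mod_cast ha
      have hb' : v i < w i + 1 := by exact_mod_cast hb
      have : v i = w i := by omega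
      exact Or.inl this
    · simp only [hc, if_neg hi] at h1 h2
      have ha' : w i ≤ v i := by exact_mod_cast h1
      have hb' : (v i : ℝ) ≤ w i + 1 := h2
      have hb'' : v i ≤ w i + 1 := by exact_mod_cast hb'
      rcases (by omega : v i = w i ∨ v i = w i + 1) with h | h
      · exact Or.inl h
      · exact Or.inr h
  refine Set.Finite.subset ?_ big
  refine Set.Finite.biUnion S.finite_toSet fun w _ => ?_
  exact (Set.Finite.pi fun i => (Set.finite_singleton _).insert _).prod Set.finite_univ

/-- Counting lattice points of a dilate of a finite union of closed integral
unit cubes via the counts of relatively open integral unit cubes in `P`. -/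
theorem card_latticePts_dilate (d : ℕ) (S : Finset (Fin d → ℤ))
    (P : Set (Fin d → ℝ)) (hP : P = ⋃ v ∈ S, closedCube v)
    (t : ℕ) (ht : 0 < t) :
    (((fun x : Fin d → ℝ => (t : ℝ) • x) '' P) ∩ latticePts d).ncard
      = ∑ k ∈ Finset.range (d + 1), cubeCount P k * (t - 1) ^ k := by
  have ht0 : (0 : ℝ) < (t : ℝ) := by exact_mod_cast ht
  have htne : (t : ℝ) ≠ 0 := ne_of_gt ht0
  -- the finite set of cells contained in P
  set C : Set ((Fin d → ℤ) × Finset (Fin d)) :=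
    {p | openCube p.1 p.2 ⊆ P} with hCdef
  have hC : C.Finite := cubeSet_finite hP
  set C' : Finset ((Fin d → ℤ) × Finset (Fin d)) := hC.toFinset with hC'def
  -- the finset of integer vectors corresponding to lattice points of t • (cell p)
  set F : ((Fin d → ℤ) × Finset (Fin d)) → (Fin d) → Finset ℤ :=
    fun p i => if i ∈ p.2 then Finset.Ioo ((t : ℤ) * p.1 i) ((t : ℤ) * p.1 i + t)
      else {(t : ℤ) * p.1 i} with hFdef
  set G : ((Fin d → ℤ) × Finset (Fin d)) → Finset (Fin d → ℝ) :=
    fun p => (Fintype.piFinset (F p)).image (fun m i => ((m i : ℤ) : ℝ)) with hGdef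
  have castinj : Function.Injective (fun (m : Fin d → ℤ) (i : Fin d) => ((m i : ℤ) : ℝ)) := by
    intro a b h
    funext i
    exact Int.cast_injective (α := ℝ) (by simpa using congrFun h i)
  -- G p is exactly the lattice points of the dilate of cell p
  have hGL : ∀ p : (Fin d → ℤ) × Finset (Fin d),
      (G p : Set (Fin d → ℝ)) =
        ((fun x : Fin d → ℝ => (t : ℝ) • x) '' openCube p.1 p.2) ∩ latticePts d := by
    rintro ⟨v, I⟩
    ext x
    simp only [hGdef, Finset.coe_image, Set.mem_image, Finset.mem_coe,
      Fintype.mem_piFinset, Set.mem_inter_iff, Set.mem_setOf_eq]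
    constructor
    · rintro ⟨m, hm, rfl⟩
      constructor
      · refine ⟨fun i => (m i : ℝ) / t, ?_, ?_⟩
        · intro i
          constructor
          · intro hi
            have := hm i
            rw [hFdef] at this
            simp only [if_pos hi, Finset.mem_Ioo] at this
            obtain ⟨h1, h2⟩ := this
            have h1' : (t : ℝ) * v i < m i := by exact_mod_cast h1
            have h2' : (m i : ℝ) < t * v i + t := by exact_mod_cast h2
            constructor
            · rw [lt_div_iff₀ ht0]; linarith
            · rw [div_lt_iff₀ ht0]; ring_nf; ring_nf at h2'; linarith
          · intro hi
            have := hm i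
            rw [hFdef] at this
            simp only [if_neg hi, Finset.mem_singleton] at this
            show (m i : ℝ) / t = v i
            rw [this]
            push_cast
            rw [mul_comm]
            exact mul_div_cancel_right₀ _ htne
        · funext i
          simp only [Pi.smul_apply, smul_eq_mul]
          exact mul_div_cancel₀ _ htne
      · intro i; exact ⟨m i, rfl⟩
    · rintro ⟨⟨z, hz, rfl⟩, hlat⟩
      choose m hm using hlat
      refine ⟨m, ?_, funext fun i => (hm i).symm⟩
      intro i
      have hmi : (m i : ℝ) = t * z i := by
        have := hm i
        simpa [Pi.smul_apply, smul_eq_mul] using this.symm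
      rw [hFdef]
      by_cases hi : i ∈ I
      · obtain ⟨h1, h2⟩ := (hz i).1 hi
        simp only [if_pos hi, Finset.mem_Ioo]
        constructor
        · have : (t : ℝ) * v i < m i := by
            rw [hmi]; exact mul_lt_mul_of_pos_left h1 ht0
          exact_mod_cast this
        · have : (m i : ℝ) < t * v i + t := by
            rw [hmi]
            have := mul_lt_mul_of_pos_left h2 ht0
            ring_nf at this ⊢
            linarith
          exact_mod_cast this
      · have hzv := (hz i).2 hi
        simp only [if_neg hi, Finset.mem_singleton]
        have : (m i : ℝ) = t * v i := by rw [hmi, hzv]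
        exact_mod_cast this
  -- cardinality of G p
  have hGcard : ∀ p : (Fin d → ℤ) × Finset (Fin d), (G p).card = (t - 1) ^ p.2.card := by
    rintro ⟨v, I⟩
    rw [hGdef]
    rw [Finset.card_image_of_injective _ castinj, Fintype.card_piFinset]
    have : ∀ i, (F (v, I) i).card = if i ∈ I then t - 1 else 1 := by
      intro i
      rw [hFdef]
      by_cases hi : i ∈ I
      · simp only [if_pos hi, Int.card_Ioo]
        omega
      · simp only [if_neg hi, Finset.card_singleton]
    simp_rw [this]
    rw [Finset.prod_ite_mem, Finset.univ_inter, Finset.prod_const]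
  -- the lattice point set is the disjoint union of the G p, p ∈ C'
  have hA : ((fun x : Fin d → ℝ => (t : ℝ) • x) '' P) ∩ latticePts d
      = ↑(C'.biUnion G) := by
    rw [Finset.coe_biUnion]
    ext x
    constructor
    · rintro ⟨⟨y, hyP, rfl⟩, hlat⟩
      set p : (Fin d → ℤ) × Finset (Fin d) := (fun i => ⌊y i⌋, cellI y) with hpdef
      have hpC : p ∈ C := cell_subset_P hP hyP
      refine Set.mem_iUnion₂.mpr ⟨p, ?_, ?_⟩
      · simp only [hC'def, Finset.mem_coe, Set.Finite.mem_toFinset]; exact hpC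
      · rw [hGL p]
        exact ⟨⟨y, mem_cell y, rfl⟩, hlat⟩
    · intro hx
      obtain ⟨p, hpC', hxG⟩ := Set.mem_iUnion₂.mp hx
      have hpC : p ∈ C := by
        simpa only [hC'def, Finset.mem_coe, Set.Finite.mem_toFinset] using hpC'
      rw [hGL p] at hxG
      obtain ⟨⟨y, hy, rfl⟩, hlat⟩ := hxG
      exact ⟨⟨y, hpC hy, rfl⟩, hlat⟩
  -- disjointness of the G p
  have hdisj : ∀ p ∈ C', ∀ q ∈ C', p ≠ q → Disjoint (G p) (G q) := by
    intro p _ q _ hpq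
    rw [← Finset.disjoint_coe, hGL p, hGL q]
    refine Set.disjoint_left.mpr ?_
    rintro x ⟨⟨y, hy, rfl⟩, -⟩ ⟨⟨z, hz, hzx⟩, -⟩
    have hyz : z = y := by
      have : (t : ℝ) • z = (t : ℝ) • y := hzx
      exact smul_right_injective _ htne this
    rw [hyz] at hz
    exact Set.disjoint_left.mp (openCube_disjoint hpq) hy hz
  rw [hA, Set.ncard_coe_finset, Finset.card_biUnion hdisj]
  -- now regroup the sum by the dimension of the cell
  have hsum : ∑ p ∈ C', (G p).card = ∑ p ∈ C', (t - 1) ^ p.2.card :=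
    Finset.sum_congr rfl fun p _ => hGcard p
  rw [hsum]
  rw [← Finset.sum_fiberwise_of_maps_to (g := fun p => p.2.card)
    (t := Finset.range (d + 1)) (fun p _ => Finset.mem_range.mpr
      (Nat.lt_succ_of_le (by simpa using Finset.card_le_card (Finset.subset_univ p.2))))]
  refine Finset.sum_congr rfl fun k _ => ?_
  have hfilter : ∑ p ∈ C'.filter (fun p => p.2.card = k), (t - 1) ^ p.2.card
      = (C'.filter (fun p => p.2.card = k)).card * (t - 1) ^ k := by
    rw [Finset.sum_congr rfl fun p hp => by
      rw [(Finset.mem_filter.mp hp).2]]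
    rw [Finset.sum_const, smul_eq_mul]
  rw [hfilter]
  congr 1
  rw [cubeCount]
  have : {p : (Fin d → ℤ) × Finset (Fin d) | p.2.card = k ∧ openCube p.1 p.2 ⊆ P}
      = ↑(C'.filter (fun p => p.2.card = k)) := by
    ext p
    simp only [Set.mem_setOf_eq, Finset.coe_filter, hC'def, Set.Finite.mem_toFinset,
      Set.mem_setOf_eq, hCdef]
    tauto
  rw [this, Set.ncard_coe_finset]
end

section
/- Let P ⊆ ℝ^d be a finite union of closed integral unit cubes and let t = (t_1,…,t_d) be a tuple of positive integers. Then #(tP ∩ ℤ^d) = Σ Π_{i ∈ I} (t_i − 1), where the sum ranges over all pairs (v,I) with v ∈ ℤ^d and I ⊆ {1,…,d} such that the relatively open integral unit cube B(v,I) is contained in P. Consequently t ↦ #(tP ∩ ℤ^d) is a polynomial function of (t_1,…,t_d) of total degree at most d in which every monomial is square-free. -/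
/-- The coordinatewise dilation `(x_1, …, x_d) ↦ (t_1 x_1, …, t_d x_d)`. -/
def dilate {d : ℕ} (t : Fin d → ℕ) (x : Fin d → ℝ) : Fin d → ℝ :=
  fun i => (t i : ℝ) * x i

namespace EhrhartAux

open Finset

variable {d : ℕ}

/-- floor vector of a point -/
noncomputable def vOf (x : Fin d → ℝ) : Fin d → ℤ := fun i => ⌊x i⌋

/-- non-integer coordinates of a point -/
noncomputable def iOf (x : Fin d → ℝ) : Finset (Fin d) := by
  classical exact Finset.univ.filter (fun i => (⌊x i⌋ : ℝ) ≠ x i)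

lemma mem_openCube_self (x : Fin d → ℝ) : x ∈ openCube (vOf x) (iOf x) := by
  classical
  intro i
  constructor
  · intro hi
    simp only [iOf, Finset.mem_filter, Finset.mem_univ, true_and] at hi
    exact ⟨lt_of_le_of_ne (Int.floor_le _) hi, Int.lt_floor_add_one _⟩
  · intro hi
    simp only [iOf, Finset.mem_filter, Finset.mem_univ, true_and, not_not] at hi
    exact hi.symm

lemma eq_of_mem_openCube {v : Fin d → ℤ} {I : Finset (Fin d)} {x : Fin d → ℝ}
    (h : x ∈ openCube v I) : v = vOf x ∧ I = iOf x := by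
  classical
  have hfloor : ∀ i, ⌊x i⌋ = v i := by
    intro i
    by_cases hi : i ∈ I
    · obtain ⟨h1, h2⟩ := (h i).1 hi
      exact Int.floor_eq_iff.mpr ⟨le_of_lt h1, h2⟩
    · rw [(h i).2 hi, Int.floor_intCast]
  constructor
  · funext i; exact (hfloor i).symm
  · ext i
    simp only [iOf, Finset.mem_filter, Finset.mem_univ, true_and]
    constructor
    · intro hi
      obtain ⟨h1, h2⟩ := (h i).1 hi
      rw [hfloor i]; exact ne_of_lt h1
    · intro hne
      by_contra hi
      exact hne (by rw [hfloor i, (h i).2 hi])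

lemma openCube_subset_closedCube {w : Fin d → ℤ} {x : Fin d → ℝ}
    (h : x ∈ closedCube w) : openCube (vOf x) (iOf x) ⊆ closedCube w := by
  classical
  intro y hy i
  have hw1 : (w i : ℝ) ≤ x i := (h i).1
  have hw2 : x i ≤ (w i : ℝ) + 1 := (h i).2
  by_cases hi : i ∈ iOf x
  · have hne : (⌊x i⌋ : ℝ) ≠ x i := by
      simpa [iOf] using hi
    obtain ⟨hy1, hy2⟩ := (hy i).1 hi
    have h1 : w i ≤ ⌊x i⌋ := Int.le_floor.mpr hw1
    have hlt : x i < (w i : ℝ) + 1 := by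
      rcases lt_or_eq_of_le hw2 with h' | h'
      · exact h'
      · exfalso
        apply hne
        have hx : x i = ((w i + 1 : ℤ) : ℝ) := by push_cast; linarith
        rw [hx, Int.floor_intCast]
    have h2 : ⌊x i⌋ ≤ w i := by
      have ha : (⌊x i⌋ : ℝ) < ((w i + 1 : ℤ) : ℝ) := by
        have := lt_of_le_of_lt (Int.floor_le (x i)) hlt
        push_cast
        linarith
      have := Int.cast_lt.mp ha
      omega
    have hvw : vOf x i = w i := by simp only [vOf]; omega
    have hc : (vOf x i : ℝ) = (w i : ℝ) := by exact_mod_cast hvw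
    constructor
    · linarith
    · linarith
  · have hxe : (⌊x i⌋ : ℝ) = x i := by
      by_contra hne
      apply hi
      simp [iOf, hne]
    have hyv := (hy i).2 hi
    rw [hyv]
    simp only [vOf]
    rw [hxe]
    exact ⟨hw1, hw2⟩

lemma pairs_finite (S : Finset (Fin d → ℤ)) (P : Set (Fin d → ℝ))
    (hP : P = ⋃ v ∈ S, closedCube v) :
    {p : (Fin d → ℤ) × Finset (Fin d) | openCube p.1 p.2 ⊆ P}.Finite := by
  classical
  set V : Finset (Fin d → ℤ) :=
    S.biUnion (fun w => Fintype.piFinset (fun i => Finset.Icc (w i) (w i + 1))) with hV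
  apply Set.Finite.subset
    (Set.Finite.prod V.finite_toSet (Set.finite_univ (α := Finset (Fin d))))
  rintro ⟨v, I⟩ hp
  have hc : (fun i => if i ∈ I then (v i : ℝ) + 2⁻¹ else (v i : ℝ)) ∈ openCube v I := by
    intro i
    constructor
    · intro hi; simp only [if_pos hi]; constructor <;> norm_num
    · intro hi; simp only [if_neg hi]
  have hcP := hp hc
  rw [hP] at hcP
  simp only [Set.mem_iUnion] at hcP
  obtain ⟨w, hw, hcw⟩ := hcP
  constructor
  · simp only [hV, Finset.coe_biUnion, Set.mem_iUnion, Finset.mem_coe]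
    refine ⟨w, hw, ?_⟩
    rw [Fintype.mem_piFinset]
    intro i
    rw [Finset.mem_Icc]
    have h1 := (hcw i).1
    have h2 := (hcw i).2
    by_cases hi : i ∈ I
    · simp only [if_pos hi] at h1 h2
      constructor
      · have hr : (w i : ℝ) < (v i : ℝ) + 1 := by linarith
        have : w i < v i + 1 := by exact_mod_cast hr
        omega
      · have hr : (v i : ℝ) < (w i : ℝ) + 1 := by linarith
        have : v i < w i + 1 := by exact_mod_cast hr
        omega
    · simp only [if_neg hi] at h1 h2
      have e1 : w i ≤ v i := by exact_mod_cast h1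
      have e2 : (v i : ℝ) ≤ ((w i + 1 : ℤ) : ℝ) := by push_cast; linarith
      exact ⟨e1, by exact_mod_cast e2⟩
  · trivial

lemma support_one_sub : ∀ m ∈ ((1 : MvPolynomial (Fin d) ℤ)).support, m = 0 := by
  intro m hm
  rw [show (1 : MvPolynomial (Fin d) ℤ) = MvPolynomial.monomial 0 1 by
    simp [MvPolynomial.monomial_zero']] at hm
  simpa using MvPolynomial.support_monomial_subset hm

lemma support_prod_le (I : Finset (Fin d)) :
    ∀ m ∈ (∏ i ∈ I, (MvPolynomial.X i - 1 : MvPolynomial (Fin d) ℤ)).support,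
      ∀ j, m j ≤ if j ∈ I then 1 else 0 := by
  classical
  induction I using Finset.induction with
  | empty =>
    intro m hm j
    simp only [Finset.prod_empty] at hm
    simp [support_one_sub m hm]
  | insert i I' hi ih =>
    intro m hm j
    rw [Finset.prod_insert hi] at hm
    obtain ⟨a, ha, b, hb, hab⟩ := Finset.mem_add.mp (MvPolynomial.support_mul _ _ hm)
    have hasub : a = Finsupp.single i 1 ∨ a = 0 := by
      rcases Finset.mem_union.mp
          (MvPolynomial.support_sub (Fin d) (MvPolynomial.X i) 1 ha) with h | h
      · left
        rw [MvPolynomial.support_X] at h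
        simpa using h
      · right
        exact support_one_sub a h
    have hbj := ih b hb j
    have hmj : m j = a j + b j := by rw [← hab]; simp
    have haj : a j ≤ if j = i then 1 else 0 := by
      rcases hasub with h | h <;> simp [h, Finsupp.single_apply, eq_comm]
    by_cases hji : j = i
    · subst hji
      have hbI : b j ≤ 0 := by simpa [hi] using hbj
      have haj' : a j ≤ 1 := by simpa using haj
      rw [if_pos (Finset.mem_insert_self _ _)]
      omega
    · have h1 : a j = 0 := by simpa [hji] using haj
      have h2 : (j ∈ insert i I') ↔ (j ∈ I') := by simp [Finset.mem_insert, hji]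
      by_cases hj' : j ∈ I' <;> simp only [h2, hj', if_pos, if_neg, if_true, if_false] <;>
        [skip; skip] <;> simp [hj'] at hbj ⊢ <;> omega

end EhrhartAux

/-- The multivariable Ehrhart function of a finite union of closed integral unit
cubes: `#(tP ∩ ℤ^d) = Σ_{(v,I) : B(v,I) ⊆ P} Π_{i ∈ I} (t_i - 1)`; consequently it
is a polynomial of total degree at most `d` all of whose monomials are square-free. -/
theorem multivariable_ehrhart (d : ℕ) (S : Finset (Fin d → ℤ))
    (P : Set (Fin d → ℝ)) (hP : P = ⋃ v ∈ S, closedCube v) :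
    (∀ t : Fin d → ℕ, (∀ i, 0 < t i) →
      ((dilate t '' P) ∩ latticePts d).ncard
        = ∑ᶠ p ∈ {p : (Fin d → ℤ) × Finset (Fin d) | openCube p.1 p.2 ⊆ P},
            ∏ i ∈ p.2, (t i - 1)) ∧
    ∃ q : MvPolynomial (Fin d) ℤ, q.totalDegree ≤ d ∧
      (∀ m ∈ q.support, ∀ i, m i ≤ 1) ∧
      ∀ t : Fin d → ℕ, (∀ i, 0 < t i) →
        (((dilate t '' P) ∩ latticePts d).ncard : ℤ)
          = MvPolynomial.eval (fun i => (t i : ℤ)) q := by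
  classical
  have hfin : {p : (Fin d → ℤ) × Finset (Fin d) | openCube p.1 p.2 ⊆ P}.Finite :=
    EhrhartAux.pairs_finite S P hP
  have hdecomp : ∀ x ∈ P, openCube (EhrhartAux.vOf x) (EhrhartAux.iOf x) ⊆ P := by
    intro x hx
    rw [hP] at hx ⊢
    simp only [Set.mem_iUnion] at hx
    obtain ⟨w, hw, hxw⟩ := hx
    intro y hy
    exact Set.mem_iUnion₂.mpr ⟨w, hw, EhrhartAux.openCube_subset_closedCube hxw hy⟩
  have key : ∀ t : Fin d → ℕ, (∀ i, 0 < t i) →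
      ((dilate t '' P) ∩ latticePts d).ncard
        = ∑ p ∈ hfin.toFinset, ∏ i ∈ p.2, (t i - 1) := by
    intro t ht
    set piF : ((Fin d → ℤ) × Finset (Fin d)) → Finset (Fin d → ℤ) := fun p =>
      Fintype.piFinset (fun i => if i ∈ p.2 then
        Finset.Ioo ((t i : ℤ) * p.1 i) ((t i : ℤ) * p.1 i + t i)
        else {(t i : ℤ) * p.1 i}) with hpiF
    have hx_of : ∀ p, ∀ m ∈ piF p,
        (fun i => (m i : ℝ) / (t i : ℝ)) ∈ openCube p.1 p.2 := by
      intro p m hm i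
      have hti : (0:ℝ) < (t i : ℝ) := by exact_mod_cast ht i
      have hmi := Fintype.mem_piFinset.mp hm i
      constructor
      · intro hi
        rw [if_pos hi, Finset.mem_Ioo] at hmi
        obtain ⟨h1, h2⟩ := hmi
        have h1' : (t i : ℝ) * (p.1 i : ℝ) < (m i : ℝ) := by exact_mod_cast h1
        have h2' : (m i : ℝ) < (t i : ℝ) * (p.1 i : ℝ) + (t i : ℝ) := by exact_mod_cast h2
        constructor
        · rw [lt_div_iff₀ hti]; linarith
        · rw [div_lt_iff₀ hti]; linarith
      · intro hi
        rw [if_neg hi, Finset.mem_singleton] at hmi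
        show (m i : ℝ) / (t i : ℝ) = (p.1 i : ℝ)
        rw [hmi]
        push_cast
        field_simp
    have hmemP : ∀ p ∈ hfin.toFinset, ∀ m ∈ piF p,
        (fun i => ((m i : ℤ) : ℝ)) ∈ (dilate t '' P) ∩ latticePts d := by
      intro p hp m hm
      refine ⟨⟨fun i => (m i : ℝ) / (t i : ℝ),
        (hfin.mem_toFinset.mp hp) (hx_of p m hm), ?_⟩, fun i => ⟨m i, rfl⟩⟩
      funext i
      have hti : ((t i : ℕ) : ℝ) ≠ 0 := Nat.cast_ne_zero.mpr (ht i).ne'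
      simp only [dilate]
      field_simp
    have himg : (dilate t '' P) ∩ latticePts d
        = (fun (m : Fin d → ℤ) => fun i => (m i : ℝ)) '' ↑(hfin.toFinset.biUnion piF) := by
      apply Set.eq_of_subset_of_subset
      · rintro y ⟨⟨x, hxP, hxy⟩, hlat⟩
        have hym : ∀ i, y i = (⌊y i⌋ : ℝ) := by
          intro i; obtain ⟨k, hk⟩ := hlat i; rw [hk, Int.floor_intCast]
        refine ⟨fun i => ⌊y i⌋, ?_, by funext i; exact (hym i).symm⟩
        rw [Finset.mem_coe, Finset.mem_biUnion]
        refine ⟨(EhrhartAux.vOf x, EhrhartAux.iOf x),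
          hfin.mem_toFinset.mpr (hdecomp x hxP), ?_⟩
        rw [Fintype.mem_piFinset]
        intro i
        have hti : (0:ℝ) < (t i : ℝ) := by exact_mod_cast ht i
        have hyx : y i = (t i : ℝ) * x i := by rw [← hxy]; rfl
        have hxoc := EhrhartAux.mem_openCube_self x i
        by_cases hi : i ∈ EhrhartAux.iOf x
        · rw [if_pos hi, Finset.mem_Ioo]
          obtain ⟨h1, h2⟩ := hxoc.1 hi
          have hr1 : (((t i : ℤ) * EhrhartAux.vOf x i : ℤ) : ℝ) < (⌊y i⌋ : ℝ) := by
            rw [← hym i, hyx]; push_cast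
            exact mul_lt_mul_of_pos_left h1 hti
          have hr2 : ((⌊y i⌋ : ℝ)) < (((t i : ℤ) * EhrhartAux.vOf x i + t i : ℤ) : ℝ) := by
            rw [← hym i, hyx]; push_cast
            nlinarith [h2, hti]
          exact ⟨by exact_mod_cast hr1, by exact_mod_cast hr2⟩
        · rw [if_neg hi, Finset.mem_singleton]
          have hxv := hxoc.2 hi
          have : (⌊y i⌋ : ℝ) = (((t i : ℤ) * EhrhartAux.vOf x i : ℤ) : ℝ) := by
            rw [← hym i, hyx, hxv]; push_cast; ring
          exact_mod_cast this
      · rintro y ⟨m, hm, rfl⟩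
        rw [Finset.mem_coe, Finset.mem_biUnion] at hm
        obtain ⟨p, hp, hmp⟩ := hm
        exact hmemP p hp m hmp
    have hinj : Function.Injective (fun (m : Fin d → ℤ) => fun i => ((m i : ℤ) : ℝ)) := by
      intro a b hab
      funext i
      have h : ((a i : ℤ) : ℝ) = ((b i : ℤ) : ℝ) := by simpa using congrFun hab i
      exact_mod_cast h
    have hdisj : ∀ p ∈ hfin.toFinset, ∀ q ∈ hfin.toFinset, p ≠ q →
        Disjoint (piF p) (piF q) := by
      intro p _ q _ hpq
      rw [Finset.disjoint_left]
      intro m hmp hmq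
      apply hpq
      have h1 := EhrhartAux.eq_of_mem_openCube (hx_of p m hmp)
      have h2 := EhrhartAux.eq_of_mem_openCube (hx_of q m hmq)
      exact Prod.ext (h1.1.trans h2.1.symm) (h1.2.trans h2.2.symm)
    have hcard : ∀ p, (piF p).card = ∏ i ∈ p.2, (t i - 1) := by
      intro p
      rw [hpiF, Fintype.card_piFinset]
      have hc : ∀ i, (if i ∈ p.2 then
            Finset.Ioo ((t i : ℤ) * p.1 i) ((t i : ℤ) * p.1 i + t i)
            else {(t i : ℤ) * p.1 i}).card
          = if i ∈ p.2 then t i - 1 else 1 := by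
        intro i
        by_cases hi : i ∈ p.2
        · simp only [hi, if_true, Int.card_Ioo]
          omega
        · simp [hi]
      simp_rw [hc]
      rw [Finset.prod_ite_mem, Finset.univ_inter]
    rw [himg, Set.ncard_image_of_injective _ hinj, Set.ncard_coe_finset,
      Finset.card_biUnion hdisj]
    exact Finset.sum_congr rfl fun p _ => hcard p
  constructor
  · intro t ht
    rw [key t ht, finsum_mem_eq_finite_toFinset_sum _ hfin]
  · refine ⟨∑ p ∈ hfin.toFinset, ∏ i ∈ p.2, (MvPolynomial.X i - 1), ?_, ?_, ?_⟩
    · refine le_trans (MvPolynomial.totalDegree_finset_sum _ _) ?_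
      rw [Finset.sup_le_iff]
      intro p _
      refine le_trans (MvPolynomial.totalDegree_finset_prod _ _) ?_
      have htd : ∀ i : Fin d, (MvPolynomial.X i - 1 : MvPolynomial (Fin d) ℤ).totalDegree ≤ 1 := by
        intro i
        rw [sub_eq_add_neg, show (-1 : MvPolynomial (Fin d) ℤ) = MvPolynomial.C (-1) by simp]
        refine le_trans (MvPolynomial.totalDegree_add _ _) ?_
        simp [MvPolynomial.totalDegree_X, MvPolynomial.totalDegree_C]
      calc ∑ i ∈ p.2, (MvPolynomial.X i - 1 : MvPolynomial (Fin d) ℤ).totalDegree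
          ≤ ∑ i ∈ p.2, 1 := Finset.sum_le_sum fun i _ => htd i
        _ = p.2.card := by simp
        _ ≤ d := by simpa using Finset.card_le_univ p.2
    · intro m hm i
      obtain ⟨p, _, hmp⟩ := Finset.mem_biUnion.mp (MvPolynomial.support_sum hm)
      have := EhrhartAux.support_prod_le p.2 m hmp i
      split at this <;> omega
    · intro t ht
      rw [key t ht, Nat.cast_sum, map_sum]
      refine Finset.sum_congr rfl fun p _ => ?_
      rw [map_prod, Nat.cast_prod]
      refine Finset.prod_congr rfl fun i _ => ?_
      have hti := ht i
      simp only [map_sub, MvPolynomial.eval_X, map_one]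
      omega
end

section
/- Let d ≥ 1 and let P ⊆ ℝ^d be a finite union of closed integral unit cubes. Then the number of relatively open integral unit cubes of dimension d−1 that are contained in P but not contained in the topological interior of P equals 2·N_{d−1}(P) − 2d·N_d(P). (Every such cube is contained in the boundary ∂P, so this counts the (d−1)-dimensional relatively open integral unit cubes lying in ∂P.) -/
/-!
A `(d-1)`-cube is `openCube v (univ.erase j)`. It lies in `P` iff one of the two `d`-cubes
adjacent to it, `closedCube v` and `closedCube (v - e_j)` with `e_j = Pi.single j 1`, belongs
to `S`, and it lies in the interior of `P` iff both do. So with `X = {(v, j) | v ∈ S}` and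
`Y = {(v, j) | v - e_j ∈ S}`, both of size `d * #S`, we get `N_{d-1}(P) = #(X ∪ Y)`, and the
boundary facets correspond to `(X ∪ Y) \ (X ∩ Y)`, whose size is `2 * #(X ∪ Y) - #X - #Y`.
-/

open Set

theorem Int.eq_of_mem_Ioo_of_mem_Icc_s13 {a b : ℤ} {x : ℝ} (ha : x ∈ Ioo (a : ℝ) (a + 1))
    (hb : x ∈ Icc (b : ℝ) (b + 1)) : b = a := by
  have hba : (b : ℝ) < a + 1 := hb.1.trans_lt ha.2
  have hab : (a : ℝ) < b + 1 := ha.1.trans_le hb.2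
  norm_cast at hba hab
  omega

theorem Int.cast_mem_Icc_cast_iff {a b : ℤ} :
    (a : ℝ) ∈ Icc (b : ℝ) (b + 1) ↔ b = a ∨ b + 1 = a := by
  rw [mem_Icc]
  norm_cast
  omega

theorem Finset.exists_eq_univ_erase_of_card_eq {α : Type*} [Fintype α] [DecidableEq α] [Nonempty α]
    {s : Finset α} (hs : s.card = Fintype.card α - 1) : ∃ a, s = Finset.univ.erase a := by
  have : sᶜ.card = 1 := by
    rw [Finset.card_compl, hs]
    have := Fintype.card_pos (α := α)
    omega
  obtain ⟨a, ha⟩ := Finset.card_eq_one.1 this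
  exact ⟨a, by rw [← Finset.compl_singleton, ← ha, compl_compl]⟩

theorem Set.ncard_union_sdiff_inter {α : Type*} {X Y : Set α} (hX : X.Finite) (hY : Y.Finite) :
    (((X ∪ Y) \ (X ∩ Y)).ncard : ℤ) = 2 * (X ∪ Y).ncard - X.ncard - Y.ncard := by
  have h₁ := ncard_union_add_ncard_inter X Y hX hY
  have h₂ := ncard_sdiff_add_ncard_of_subset (s := X ∩ Y)
    (inter_subset_left.trans subset_union_left) (hX.union hY)
  omega

section

variable {d : ℕ} {v w : Fin d → ℤ} {I : Finset (Fin d)}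

theorem openCube_nonempty (v : Fin d → ℤ) (I : Finset (Fin d)) : (openCube v I).Nonempty := by
  refine ⟨fun i => if i ∈ I then v i + 1 / 2 else v i, fun i => ⟨fun hi => ?_, fun hi => ?_⟩⟩
  · simp only [hi, if_true]
    constructor <;> linarith
  · simp [hi]

theorem openCube_univ_eq_pi (v : Fin d → ℤ) :
    openCube v Finset.univ = univ.pi fun i => Ioo (v i : ℝ) (v i + 1) := by
  ext x
  simp [openCube]

theorem closedCube_eq_pi (v : Fin d → ℤ) :
    closedCube v = univ.pi fun i => Icc (v i : ℝ) (v i + 1) := by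
  ext x
  simp only [closedCube, mem_ofPred_eq, mem_univ_pi, mem_Icc]

theorem closure_openCube_univ (v : Fin d → ℤ) :
    closure (openCube v Finset.univ) = closedCube v := by
  simp only [openCube_univ_eq_pi, closure_pi_set, closedCube_eq_pi]
  congr! with i
  exact closure_Ioo (by simp)

theorem openCube_subset_closedCube_of_mem {x : Fin d → ℝ} (hx : x ∈ openCube v I)
    (hxw : x ∈ closedCube w) : openCube v I ⊆ closedCube w := by
  intro y hy i
  by_cases hi : i ∈ I
  · rw [Int.eq_of_mem_Ioo_of_mem_Icc_s13 ((hx i).1 hi) (hxw i)]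
    exact ⟨((hy i).1 hi).1.le, ((hy i).1 hi).2.le⟩
  · rw [(hy i).2 hi, ← (hx i).2 hi]
    exact hxw i

theorem openCube_subset_closedCube_iff :
    openCube v I ⊆ closedCube w ↔ ∀ i, w i = v i ∨ (i ∉ I ∧ w i + 1 = v i) := by
  constructor
  · intro h i
    obtain ⟨x, hx⟩ := openCube_nonempty v I
    by_cases hi : i ∈ I
    · exact Or.inl (Int.eq_of_mem_Ioo_of_mem_Icc_s13 ((hx i).1 hi) (h hx i))
    · have hxi : x i ∈ Icc (w i : ℝ) (w i + 1) := h hx i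
      rw [(hx i).2 hi, Int.cast_mem_Icc_cast_iff] at hxi
      exact hxi.imp_right fun h => ⟨hi, h⟩
  · intro hw x hx i
    by_cases hi : i ∈ I
    · rw [(hw i).resolve_right fun h => h.1 hi]
      exact ⟨((hx i).1 hi).1.le, ((hx i).1 hi).2.le⟩
    · rw [(hx i).2 hi]
      exact Int.cast_mem_Icc_cast_iff.2 ((hw i).imp_right And.right)

theorem openCube_univ_subset_closedCube_iff : openCube v Finset.univ ⊆ closedCube w ↔ w = v := by
  simp [openCube_subset_closedCube_iff, funext_iff]

theorem openCube_univ_erase_subset_closedCube_iff (j : Fin d) :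
    openCube v (Finset.univ.erase j) ⊆ closedCube w ↔ w = v ∨ w = v - Pi.single j 1 := by
  simp only [openCube_subset_closedCube_iff, Finset.mem_erase, Finset.mem_univ, and_true, not_not]
  constructor
  · intro h
    by_cases hj : w j = v j
    · left
      funext i
      rcases h i with hi | ⟨rfl, -⟩
      exacts [hi, hj]
    · right
      funext i
      rcases h i with hi | ⟨rfl, hi⟩
      · have hij : i ≠ j := by rintro rfl; exact hj hi
        simp [hij, hi]
      · rw [Pi.sub_apply, Pi.single_eq_same]
        omega
  · rintro (rfl | rfl) i
    · exact Or.inl rfl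
    · by_cases hij : i = j
      · subst hij
        simp
      · simp [hij]

variable {S : Set (Fin d → ℤ)}

theorem openCube_subset_biUnion_closedCube_iff :
    openCube v I ⊆ ⋃ w ∈ S, closedCube w ↔ ∃ w ∈ S, openCube v I ⊆ closedCube w := by
  refine ⟨fun h => ?_, fun ⟨w, hw, h⟩ => h.trans (subset_biUnion_of_mem hw)⟩
  obtain ⟨x, hx⟩ := openCube_nonempty v I
  obtain ⟨w, hw, hxw⟩ := mem_iUnion₂.1 (h hx)
  exact ⟨w, hw, openCube_subset_closedCube_of_mem hx hxw⟩

theorem mem_of_openCube_subset_interior (hw : openCube v I ⊆ closedCube w)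
    (h : openCube v I ⊆ interior (⋃ u ∈ S, closedCube u)) : w ∈ S := by
  obtain ⟨x, hx⟩ := openCube_nonempty v I
  -- an open set meeting `closedCube w = closure (openCube w univ)` meets `openCube w univ`,
  -- and the only integral cube covering a point of `openCube w univ` is `closedCube w`
  obtain ⟨y, hyw, hyP⟩ : (openCube w Finset.univ ∩ interior (⋃ u ∈ S, closedCube u)).Nonempty :=
    (closure_inter_open_nonempty_iff isOpen_interior).1
      ⟨x, closure_openCube_univ w ▸ hw hx, h hx⟩
  obtain ⟨u, hu, hyu⟩ := mem_iUnion₂.1 (interior_subset hyP)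
  rwa [openCube_univ_subset_closedCube_iff.1 (openCube_subset_closedCube_of_mem hyw hyu)] at hu

theorem openCube_subset_interior_of_forall (hS : ∀ w, openCube v I ⊆ closedCube w → w ∈ S) :
    openCube v I ⊆ interior (⋃ w ∈ S, closedCube w) := by
  set U : Set (Fin d → ℝ) := univ.pi fun i =>
    if i ∈ I then Ioo (v i : ℝ) (v i + 1) else Ioo (v i - 1 : ℝ) (v i + 1)
  have hU : IsOpen U := isOpen_set_pi finite_univ fun i _ => by split_ifs <;> exact isOpen_Ioo
  have hvU : openCube v I ⊆ U := by
    intro x hx i _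
    by_cases hi : i ∈ I
    · simpa [hi] using (hx i).1 hi
    · simp only [hi, if_false, (hx i).2 hi, mem_Ioo]
      constructor <;> linarith
  have hUS : U ⊆ ⋃ w ∈ S, closedCube w := by
    intro y hy
    have hy' : ∀ i, (v i - 1 : ℝ) < y i ∧ y i < v i + 1 ∧ (i ∈ I → (v i : ℝ) < y i) := by
      intro i
      have := hy i (mem_univ i)
      by_cases hi : i ∈ I
      · simp only [hi, if_true, mem_Ioo] at this
        exact ⟨by linarith, this.2, fun _ => this.1⟩
      · simp only [hi, if_false, mem_Ioo] at this
        exact ⟨this.1, this.2, fun h => absurd h hi⟩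
    -- round `y` down to the lattice, except along the directions of `I`
    let w : Fin d → ℤ := fun i => if (v i : ℝ) ≤ y i then v i else v i - 1
    refine mem_iUnion₂.2 ⟨w, hS w (openCube_subset_closedCube_iff.2 fun i => ?_), fun i => ?_⟩
    · by_cases hvy : (v i : ℝ) ≤ y i
      · simp [w, hvy]
      · exact Or.inr ⟨fun hi => hvy ((hy' i).2.2 hi).le, by simp [w, hvy]⟩
    · by_cases hvy : (v i : ℝ) ≤ y i
      · rw [show w i = v i from if_pos hvy]
        exact ⟨hvy, (hy' i).2.1.le⟩
      · rw [show w i = v i - 1 from if_neg hvy]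
        push_cast
        constructor <;> linarith [(hy' i).1]
  exact hvU.trans (interior_maximal hUS hU)

theorem openCube_subset_interior_biUnion_closedCube_iff :
    openCube v I ⊆ interior (⋃ w ∈ S, closedCube w) ↔ ∀ w, openCube v I ⊆ closedCube w → w ∈ S :=
  ⟨fun h _ hw => mem_of_openCube_subset_interior hw h, openCube_subset_interior_of_forall⟩

theorem openCube_univ_subset_biUnion_closedCube_iff :
    openCube v Finset.univ ⊆ ⋃ w ∈ S, closedCube w ↔ v ∈ S := by
  simp [openCube_subset_biUnion_closedCube_iff, openCube_univ_subset_closedCube_iff]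

theorem openCube_univ_erase_subset_biUnion_closedCube_iff (j : Fin d) :
    openCube v (Finset.univ.erase j) ⊆ ⋃ w ∈ S, closedCube w ↔ v ∈ S ∨ v - Pi.single j 1 ∈ S := by
  simp [openCube_subset_biUnion_closedCube_iff, openCube_univ_erase_subset_closedCube_iff,
    and_or_left, exists_or]

theorem openCube_univ_erase_subset_interior_biUnion_closedCube_iff (j : Fin d) :
    openCube v (Finset.univ.erase j) ⊆ interior (⋃ w ∈ S, closedCube w) ↔
      v ∈ S ∧ v - Pi.single j 1 ∈ S := by
  simp [openCube_subset_interior_biUnion_closedCube_iff, openCube_univ_erase_subset_closedCube_iff,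
    or_imp, forall_and]

theorem ncard_setOf_card_eq_sub_one (hd : 1 ≤ d) (Q : (Fin d → ℤ) × Finset (Fin d) → Prop) :
    {p : (Fin d → ℤ) × Finset (Fin d) | p.2.card = d - 1 ∧ Q p}.ncard =
      {q : (Fin d → ℤ) × Fin d | Q (q.1, Finset.univ.erase q.2)}.ncard := by
  have : Nonempty (Fin d) := Fin.pos_iff_nonempty.1 hd
  have hinj : Function.Injective fun q : (Fin d → ℤ) × Fin d => (q.1, Finset.univ.erase q.2) := by
    rintro ⟨v, j⟩ ⟨v', j'⟩ h
    simp only [Prod.mk.injEq, Finset.erase_inj _ (Finset.mem_univ _)] at h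
    rw [h.1, h.2]
  rw [← ncard_image_of_injective _ hinj]
  congr 1
  ext ⟨v, I⟩
  constructor
  · rintro ⟨hI, hQ⟩
    obtain ⟨j, rfl⟩ := Finset.exists_eq_univ_erase_of_card_eq (s := I) (by simpa using hI)
    exact ⟨(v, j), hQ, rfl⟩
  · rintro ⟨⟨v, j⟩, hQ, h⟩
    cases h
    exact ⟨by simp, hQ⟩

theorem ncard_setOf_card_eq (Q : (Fin d → ℤ) × Finset (Fin d) → Prop) :
    {p : (Fin d → ℤ) × Finset (Fin d) | p.2.card = d ∧ Q p}.ncard =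
      {v : Fin d → ℤ | Q (v, Finset.univ)}.ncard := by
  rw [← ncard_image_of_injective {v | Q (v, Finset.univ)}
    (Prod.mk_left_injective (Finset.univ : Finset (Fin d)))]
  congr 1
  ext ⟨v, I⟩
  constructor
  · rintro ⟨hI, hQ⟩
    obtain rfl : I = Finset.univ := (Finset.card_eq_iff_eq_univ I).1 (by simpa using hI)
    exact ⟨v, hQ, rfl⟩
  · rintro ⟨v, hQ, h⟩
    cases h
    exact ⟨by simp, hQ⟩

theorem bijective_sub_single_fst {ι G : Type*} [DecidableEq ι] [AddGroup G] (g : G) :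
    Function.Bijective fun q : (ι → G) × ι => (q.1 - Pi.single q.2 g, q.2) := by
  refine ⟨?_, fun q => ⟨(q.1 + Pi.single q.2 g, q.2), by simp⟩⟩
  rintro ⟨v, j⟩ ⟨v', j'⟩ h
  simp only [Prod.mk.injEq] at h
  obtain ⟨h, rfl⟩ := h
  rw [sub_left_inj.1 h]

theorem ncard_setOf_mem_xor_sub_single_mem (S : Finset (Fin d → ℤ)) :
    ({q : (Fin d → ℤ) × Fin d | (q.1 ∈ S ∨ q.1 - Pi.single q.2 1 ∈ S) ∧
        ¬(q.1 ∈ S ∧ q.1 - Pi.single q.2 1 ∈ S)}.ncard : ℤ) =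
      2 * {q : (Fin d → ℤ) × Fin d | q.1 ∈ S ∨ q.1 - Pi.single q.2 1 ∈ S}.ncard
        - 2 * d * S.card := by
  set X : Set ((Fin d → ℤ) × Fin d) := {q | q.1 ∈ S}
  set Y := (fun q : (Fin d → ℤ) × Fin d => (q.1 - Pi.single q.2 (1 : ℤ), q.2)) ⁻¹' X
  change (((X ∪ Y) \ (X ∩ Y)).ncard : ℤ) = 2 * (X ∪ Y).ncard - 2 * d * S.card
  have hshift := bijective_sub_single_fst (ι := Fin d) (1 : ℤ)
  have hX_eq : X = (S : Set (Fin d → ℤ)) ×ˢ univ := by ext; simp [X]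
  have hX : X.ncard = S.card * d := by
    rw [hX_eq, ncard_prod, ncard_coe_finset, ncard_univ, Nat.card_eq_fintype_card,
      Fintype.card_fin]
  have hY : Y.ncard = X.ncard :=
    ncard_preimage_of_injective_subset_range hshift.1 (by simp [hshift.2.range_eq])
  have hXfin : X.Finite := hX_eq ▸ S.finite_toSet.prod finite_univ
  rw [ncard_union_sdiff_inter hXfin (hXfin.preimage hshift.1.injOn), hY, hX]
  push_cast
  ring

end

/-- The number of relatively open integral unit cubes of dimension `d-1` contained
in `P` but not contained in the topological interior of `P` (i.e., those lying in
the boundary of `P`) equals `2·N_{d-1}(P) - 2d·N_d(P)`. -/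
theorem boundary_facet_count (d : ℕ) (hd : 1 ≤ d) (S : Finset (Fin d → ℤ))
    (P : Set (Fin d → ℝ)) (hP : P = ⋃ v ∈ S, closedCube v) :
    ({p : (Fin d → ℤ) × Finset (Fin d) |
        p.2.card = d - 1 ∧ openCube p.1 p.2 ⊆ P ∧ ¬ openCube p.1 p.2 ⊆ interior P}.ncard : ℤ)
      = 2 * (cubeCount P (d - 1) : ℤ) - 2 * (d : ℤ) * (cubeCount P d : ℤ) := by
  replace hP : P = ⋃ v ∈ (S : Set (Fin d → ℤ)), closedCube v := hP
  rw [ncard_setOf_card_eq_sub_one hd fun p => openCube p.1 p.2 ⊆ P ∧ ¬openCube p.1 p.2 ⊆ interior P,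
    cubeCount, ncard_setOf_card_eq_sub_one hd, cubeCount, ncard_setOf_card_eq]
  subst hP
  simp only [openCube_univ_erase_subset_biUnion_closedCube_iff,
    openCube_univ_erase_subset_interior_biUnion_closedCube_iff,
    openCube_univ_subset_biUnion_closedCube_iff]
  simp only [Finset.mem_coe, Finset.setOfPred_mem, ncard_coe_finset]
  exact ncard_setOf_mem_xor_sub_single_mem S
end
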